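/- arXiv:2404.12204 — 5 statements merged into one kernel-verified Lean document; each statement's English description precedes it below -/
import Mathlib

section
/- For any integers p ≥ 2, q ≥ p, t ≥ 2 and n ≥ p + (t-1)q + t - 3, the graph H(n,p,q,t) = K_{p-2} ∨ ((t-1)K_{q+1} ∪ I_{n-t+3-p-q(t-1)}) contains no subgraph isomorphic to K_p ∪ (t-1)K_q. -/
/-- `G` contains a subgraph isomorphic to `K_p ∪ (t-1)K_q`: pairwise disjoint
cliques of sizes `p, q, …, q` (with `t-1` cliques of size `q`). -/
def HasCliqueUnion {V : Type*} (G : SimpleGraph V) (p q t : ℕ) : Prop :=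
  ∃ (A : Finset V) (B : Fin (t-1) → Finset V),
    G.IsNClique p A ∧ (∀ i, G.IsNClique q (B i)) ∧
    (∀ i, Disjoint A (B i)) ∧
    ∀ i j, i ≠ j → Disjoint (B i) (B j)

/-- The graph `H(n,p,q,t) = K_{p-2} ∨ ((t-1)K_{q+1} ∪ I_{n-t+3-p-q(t-1)})` on `Fin n`:
the first `p-2` vertices are dominating, the next `(t-1)(q+1)` vertices are grouped into
`t-1` cliques of size `q+1`, and the remaining vertices are independent. -/
def HGraph (n p q t : ℕ) : SimpleGraph (Fin n) :=
  SimpleGraph.fromRel (fun x y =>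
    x.val < p - 2 ∨
    (x.val < p - 2 + (t-1)*(q+1) ∧ y.val < p - 2 + (t-1)*(q+1) ∧
      (x.val - (p-2)) / (q+1) = (y.val - (p-2)) / (q+1)))

section Aux

variable {n p q t : ℕ}

lemma hg_adj {x y : Fin n} (h : (HGraph n p q t).Adj x y)
    (hx : p - 2 ≤ x.val) (hy : p - 2 ≤ y.val) :
    x.val < p - 2 + (t-1)*(q+1) ∧ y.val < p - 2 + (t-1)*(q+1) ∧
      (x.val - (p-2)) / (q+1) = (y.val - (p-2)) / (q+1) := by
  rw [HGraph, SimpleGraph.fromRel_adj] at h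
  obtain ⟨hne, h | h⟩ := h
  · rcases h with h | h
    · omega
    · exact h
  · rcases h with h | h
    · omega
    · exact ⟨h.2.1, h.1, h.2.2.symm⟩

/-- Any clique whose part outside the dominating set has ≥ 2 vertices lies in a single group. -/
lemma clique_group {C : Finset (Fin n)} (hC : (HGraph n p q t).IsClique C)
    (h2 : 2 ≤ (C.filter fun v => p - 2 ≤ v.val).card) :
    ∃ g, g < t - 1 ∧ ∀ v ∈ C, p - 2 ≤ v.val → (v.val - (p-2)) / (q+1) = g := by
  obtain ⟨v0, hv0⟩ := Finset.card_pos.mp (by omega : 0 < (C.filter fun v => p - 2 ≤ v.val).card)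
  obtain ⟨hv0C, hv0k⟩ := Finset.mem_filter.mp hv0
  obtain ⟨w, hw, hwne⟩ := Finset.exists_mem_ne h2 v0
  obtain ⟨hwC, hwk⟩ := Finset.mem_filter.mp hw
  have hadj := hg_adj (hC (Finset.mem_coe.mpr hwC) (Finset.mem_coe.mpr hv0C) hwne) hwk hv0k
  refine ⟨(v0.val - (p-2)) / (q+1), ?_, ?_⟩
  · have hlt : v0.val - (p-2) < (q+1)*(t-1) := by
      have h1 := hadj.2.1
      have : v0.val < p - 2 + (q+1)*(t-1) := by rw [mul_comm]; exact h1
      omega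
    exact Nat.div_lt_of_lt_mul hlt
  · intro v hvC hvk
    by_cases hve : v = v0
    · subst hve; rfl
    · exact (hg_adj (hC (Finset.mem_coe.mpr hvC) (Finset.mem_coe.mpr hv0C) hve) hvk hv0k).2.2

/-- Two cliques in the same group use at most `q+1` vertices outside the dominating set. -/
lemma pair_bound {C1 C2 : Finset (Fin n)} (g : ℕ)
    (h1 : ∀ v ∈ C1, p - 2 ≤ v.val → (v.val - (p-2)) / (q+1) = g)
    (h2 : ∀ v ∈ C2, p - 2 ≤ v.val → (v.val - (p-2)) / (q+1) = g) :
    ((C1 ∪ C2).filter fun v => p - 2 ≤ v.val).card ≤ q + 1 := by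
  have key : ∀ v ∈ (C1 ∪ C2).filter fun v => p - 2 ≤ v.val,
      p - 2 ≤ v.val ∧ (v.val - (p-2)) / (q+1) = g := by
    intro v hv
    obtain ⟨hvm, hvk⟩ := Finset.mem_filter.mp hv
    rcases Finset.mem_union.mp hvm with h | h
    · exact ⟨hvk, h1 v h hvk⟩
    · exact ⟨hvk, h2 v h hvk⟩
  have := Finset.card_le_card_of_injOn (fun v : Fin n => (v.val - (p-2)) % (q+1))
    (fun v _ => Finset.mem_range.mpr (Nat.mod_lt _ (by omega)))
    (fun a ha b hb hab => by
      obtain ⟨hak, hag⟩ := key a (Finset.mem_coe.mp ha)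
      obtain ⟨hbk, hbg⟩ := key b (Finset.mem_coe.mp hb)
      have hab' : (a.val - (p-2)) % (q+1) = (b.val - (p-2)) % (q+1) := hab
      have ea := Nat.div_add_mod (a.val - (p-2)) (q+1)
      have eb := Nat.div_add_mod (b.val - (p-2)) (q+1)
      have : a.val = b.val := by rw [hag] at ea; rw [hbg] at eb; omega
      exact Fin.ext this)
  simpa using this

/-- At most `p-2` vertices of any set lie in the dominating part. -/
lemma filter_lb (C : Finset (Fin n)) :
    C.card - (p - 2) ≤ (C.filter fun v => p - 2 ≤ v.val).card := by
  have hsplit := Finset.card_filter_add_card_filter_not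
    (s := C) (p := fun v : Fin n => p - 2 ≤ v.val)
  have hsmall : (C.filter fun v => ¬ p - 2 ≤ v.val).card ≤ p - 2 := by
    have h := Finset.card_le_card_of_injOn (s := C.filter fun v => ¬ p - 2 ≤ v.val)
      (t := Finset.range (p - 2)) (fun v : Fin n => v.val)
      (fun v hv => Finset.mem_range.mpr (by
        have := (Finset.mem_filter.mp hv).2; show v.val < p - 2; omega))
      (fun a _ b _ hab => Fin.ext hab)
    simpa using h
  omega

end Aux

/-- `H(n,p,q,t)` contains no subgraph isomorphic to `K_p ∪ (t-1)K_q`. -/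
theorem stmt_1 (n p q t : ℕ) (hp : 2 ≤ p) (hpq : p ≤ q) (ht : 2 ≤ t)
    (hn : p + (t-1)*q + t - 3 ≤ n) :
    ¬ HasCliqueUnion (HGraph n p q t) p q t := by
  rintro ⟨A, B, hA, hB, hAB, hBB⟩
  -- each clique has at least 2 vertices outside the dominating set
  have hA2 : 2 ≤ (A.filter fun v => p - 2 ≤ v.val).card := by
    have := filter_lb (p := p) A; rw [hA.2] at this; omega
  have hB2 : ∀ i, 2 ≤ ((B i).filter fun v => p - 2 ≤ v.val).card := by
    intro i
    have := filter_lb (p := p) (B i); rw [(hB i).2] at this; omega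
  obtain ⟨gA, hgAlt, hgA⟩ := clique_group hA.1 hA2
  choose gB hgBlt hgB using fun i => clique_group (hB i).1 (hB2 i)
  -- the pigeonhole step
  have key : ∀ (C1 C2 : Finset (Fin n)) (g : ℕ), Disjoint C1 C2 →
      (∀ v ∈ C1, p - 2 ≤ v.val → (v.val - (p-2)) / (q+1) = g) →
      (∀ v ∈ C2, p - 2 ≤ v.val → (v.val - (p-2)) / (q+1) = g) →
      C1.card + C2.card ≤ q + 1 + (p - 2) := by
    intro C1 C2 g hd h1 h2
    have hub := pair_bound (p := p) g h1 h2
    have hlb := filter_lb (p := p) (C1 ∪ C2)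
    rw [Finset.card_union_of_disjoint hd] at hlb
    omega
  set gfun : Fin (t-1) → Fin (t-1) := fun i => ⟨gB i, hgBlt i⟩ with hgfun
  by_cases hinj : Function.Injective gfun
  · have hsurj := Finite.injective_iff_surjective.mp hinj
    obtain ⟨i, hi⟩ := hsurj ⟨gA, hgAlt⟩
    have hgi : gB i = gA := congrArg Fin.val hi
    have := key A (B i) gA (hAB i) hgA (by rw [← hgi]; exact hgB i)
    rw [hA.2, (hB i).2] at this
    omega
  · simp only [Function.Injective, not_forall] at hinj
    obtain ⟨i, j, hij, hne⟩ := hinj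
    have hgij : gB i = gB j := congrArg Fin.val hij
    have := key (B i) (B j) (gB j) (hBB i j hne) (by rw [← hgij]; exact hgB i) (hgB j)
    rw [(hB i).2, (hB j).2] at this
    omega
end

section
/- For any integers p ≥ 2, q ≥ p, t ≥ 2 and n ≥ p + (t-1)q + t - 3, the graph H(n,p,q,t) = K_{p-2} ∨ ((t-1)K_{q+1} ∪ I_{n-t+3-p-q(t-1)}) is K_p ∪ (t-1)K_q-saturated: it contains no copy of K_p ∪ (t-1)K_q, but adding any edge between two nonadjacent vertices creates such a copy. -/
/-- `G` is `K_p ∪ (t-1)K_q`-saturated. -/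
def Saturated {V : Type*} (G : SimpleGraph V) (p q t : ℕ) : Prop :=
  ¬ HasCliqueUnion G p q t ∧
  ∀ u v : V, u ≠ v → ¬ G.Adj u v →
    HasCliqueUnion (G ⊔ SimpleGraph.fromEdgeSet {s(u,v)}) p q t

namespace HSat

open Finset SimpleGraph

/-- The dominating vertices. -/
def Dv (n p : ℕ) : Finset (Fin n) := univ.filter (fun x => x.val < p - 2)

/-- Block `b` of the clique zone. -/
def blk (n p q b : ℕ) : Finset (Fin n) :=
  univ.filter (fun x => p - 2 + b*(q+1) ≤ x.val ∧ x.val < p - 2 + b*(q+1) + (q+1))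

lemma mem_Dv {n p : ℕ} {x : Fin n} : x ∈ Dv n p ↔ x.val < p - 2 := by simp [Dv]

lemma mem_blk {n p q b : ℕ} {x : Fin n} :
    x ∈ blk n p q b ↔ p - 2 + b*(q+1) ≤ x.val ∧ x.val < p - 2 + b*(q+1) + (q+1) := by
  simp [blk]

lemma Dv_card_le {n p : ℕ} : (Dv n p).card ≤ p - 2 := by
  have h := Finset.card_le_card_of_injOn (fun x : Fin n => x.val)
    (s := Dv n p) (t := Finset.range (p-2))
    (by intro a ha; rw [Finset.mem_coe, mem_Dv] at ha; simpa using ha)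
    (by intro a _ b _ h; exact Fin.ext h)
  simpa using h

lemma blk_card_le {n p q b : ℕ} : (blk n p q b).card ≤ q + 1 := by
  have h := Finset.card_le_card_of_injOn (fun x : Fin n => x.val)
    (s := blk n p q b) (t := Finset.Ico (p-2+b*(q+1)) (p-2+b*(q+1)+(q+1)))
    (by intro a ha; rw [Finset.mem_coe, mem_blk] at ha; simpa using ha)
    (by intro a _ b _ h; exact Fin.ext h)
  simpa using h

lemma blk_card {n p q b : ℕ} (h : p - 2 + b*(q+1) + (q+1) ≤ n) :
    (blk n p q b).card = q + 1 := by
  have hlt : ∀ m ∈ Finset.Ico (p-2+b*(q+1)) (p-2+b*(q+1)+(q+1)), m < n := by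
    intro m hm; rw [Finset.mem_Ico] at hm; omega
  have : blk n p q b = (Finset.Ico (p-2+b*(q+1)) (p-2+b*(q+1)+(q+1))).attachFin hlt := by
    ext x; rw [mem_blk, Finset.mem_attachFin, Finset.mem_Ico]
  rw [this, Finset.card_attachFin]
  simp

lemma Dv_card {n p : ℕ} (h : p - 2 ≤ n) : (Dv n p).card = p - 2 := by
  have hlt : ∀ m ∈ Finset.range (p-2), m < n := by
    intro m hm; rw [Finset.mem_range] at hm; omega
  have : Dv n p = (Finset.range (p-2)).attachFin hlt := by
    ext x; rw [mem_Dv, Finset.mem_attachFin, Finset.mem_range]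
  rw [this, Finset.card_attachFin, Finset.card_range]

lemma blk_disjoint {n p q b c : ℕ} (h : b ≠ c) : Disjoint (blk n p q b) (blk n p q c) := by
  rw [Finset.disjoint_left]
  intro x hb hc
  rw [mem_blk] at hb hc
  rcases Nat.lt_or_ge b c with hlt | hge
  · have : (b+1)*(q+1) ≤ c*(q+1) := Nat.mul_le_mul_right _ hlt
    rw [add_mul, one_mul] at this
    omega
  · have hlt : c < b := by omega
    have : (c+1)*(q+1) ≤ b*(q+1) := Nat.mul_le_mul_right _ hlt
    rw [add_mul, one_mul] at this
    omega

lemma adj_iff {n p q t : ℕ} {x y : Fin n} : (HGraph n p q t).Adj x y ↔ x ≠ y ∧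
    (x.val < p - 2 ∨ y.val < p - 2 ∨
      (x.val < p - 2 + (t-1)*(q+1) ∧ y.val < p - 2 + (t-1)*(q+1) ∧
        (x.val - (p-2)) / (q+1) = (y.val - (p-2)) / (q+1))) := by
  rw [HGraph, SimpleGraph.fromRel_adj]
  refine and_congr_right fun _ => ?_
  constructor
  · rintro ((h | h) | (h | h))
    · exact Or.inl h
    · exact Or.inr (Or.inr h)
    · exact Or.inr (Or.inl h)
    · exact Or.inr (Or.inr ⟨h.2.1, h.1, h.2.2.symm⟩)
  · rintro (h | h | h)
    · exact Or.inl (Or.inl h)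
    · exact Or.inr (Or.inl h)
    · exact Or.inl (Or.inr h)

lemma blk_adj {n p q t b : ℕ} (hb : b < t - 1) {x y : Fin n}
    (hx : x ∈ blk n p q b) (hy : y ∈ blk n p q b) (hxy : x ≠ y) :
    (HGraph n p q t).Adj x y := by
  rw [mem_blk] at hx hy
  rw [adj_iff]
  refine ⟨hxy, Or.inr (Or.inr ⟨?_, ?_, ?_⟩)⟩
  · have : (b+1)*(q+1) ≤ (t-1)*(q+1) := Nat.mul_le_mul_right _ (by omega)
    rw [add_mul, one_mul] at this; omega
  · have : (b+1)*(q+1) ≤ (t-1)*(q+1) := Nat.mul_le_mul_right _ (by omega)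
    rw [add_mul, one_mul] at this; omega
  · have h1 : (x.val - (p-2)) / (q+1) = b := by
      apply Nat.div_eq_of_lt_le
      · omega
      · rw [add_mul, one_mul]; omega
    have h2 : (y.val - (p-2)) / (q+1) = b := by
      apply Nat.div_eq_of_lt_le
      · omega
      · rw [add_mul, one_mul]; omega
    rw [h1, h2]

/-- From adjacency of two nondominating vertices, both lie in the same block. -/
lemma adj_nondom {n p q t : ℕ} {x y : Fin n} (h : (HGraph n p q t).Adj x y)
    (hx : p - 2 ≤ x.val) (hy : p - 2 ≤ y.val) :
    (x.val - (p-2)) / (q+1) < t - 1 ∧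
    x ∈ blk n p q ((x.val - (p-2)) / (q+1)) ∧
    y ∈ blk n p q ((x.val - (p-2)) / (q+1)) := by
  rw [adj_iff] at h
  obtain ⟨-, h⟩ := h
  rcases h with h | h | ⟨hxz, hyz, hdiv⟩
  · omega
  · omega
  ·
    have hQ : 0 < q + 1 := Nat.succ_pos q
    have hmemblk : ∀ z : Fin n, p - 2 ≤ z.val → z.val < p - 2 + (t-1)*(q+1) →
        z ∈ blk n p q ((z.val - (p-2)) / (q+1)) := by
      intro z hz hzz
      rw [mem_blk]
      have h1 : (z.val - (p-2)) / (q+1) * (q+1) ≤ z.val - (p-2) :=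
        Nat.div_mul_le_self _ _
      have h2 := Nat.div_add_mod (z.val - (p-2)) (q+1)
      have h3 := Nat.mod_lt (z.val - (p-2)) hQ
      constructor
      · omega
      · have : (q+1) * ((z.val - (p-2)) / (q+1)) = ((z.val - (p-2)) / (q+1)) * (q+1) :=
          Nat.mul_comm _ _
        omega
    have hblt : (x.val - (p-2)) / (q+1) < t - 1 := by
      rw [Nat.div_lt_iff_lt_mul hQ]
      omega
    refine ⟨hblt, hmemblk x hx hxz, ?_⟩
    rw [hdiv]
    exact hmemblk y hy hyz

/-- The nondominating part of a big clique lies in one block. -/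
lemma clique_nondom_subset_blk {n p q t : ℕ} (hp : 2 ≤ p) {S : Finset (Fin n)}
    (hS : (HGraph n p q t).IsClique S) (hcard : p ≤ S.card) :
    ∃ b, b < t - 1 ∧ S.filter (fun x => p - 2 ≤ x.val) ⊆ blk n p q b := by
  classical
  set N := S.filter (fun x => p - 2 ≤ x.val) with hN
  have hsplit := Finset.card_filter_add_card_filter_not
    (s := S) (p := fun x => p - 2 ≤ x.val)
  rw [← hN] at hsplit
  have hDsub : S.filter (fun x => ¬ p - 2 ≤ x.val) ⊆ Dv n p := by
    intro x hx; rw [Finset.mem_filter] at hx; rw [mem_Dv]; omega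
  have hD : (S.filter (fun x => ¬ p - 2 ≤ x.val)).card ≤ p - 2 :=
    le_trans (Finset.card_le_card hDsub) Dv_card_le
  have hN2 : 1 < N.card := by omega
  rw [Finset.one_lt_card] at hN2
  obtain ⟨x, hxN, y, hyN, hxy⟩ := hN2
  have hxS : x ∈ S := (Finset.mem_filter.mp hxN).1
  have hxd : p - 2 ≤ x.val := (Finset.mem_filter.mp hxN).2
  have hadj : (HGraph n p q t).Adj x y :=
    hS hxS (Finset.mem_filter.mp hyN).1 hxy
  obtain ⟨hblt, hxb, -⟩ := adj_nondom hadj hxd (Finset.mem_filter.mp hyN).2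
  refine ⟨(x.val - (p-2)) / (q+1), hblt, ?_⟩
  intro z hz
  rcases eq_or_ne z x with rfl | hzx
  · exact hxb
  · have hadj2 : (HGraph n p q t).Adj x z :=
      hS hxS (Finset.mem_filter.mp hz).1 (Ne.symm hzx)
    exact (adj_nondom hadj2 hxd (Finset.mem_filter.mp hz).2).2.2

theorem stmt_2_part1 (n p q t : ℕ) (hp : 2 ≤ p) (hpq : p ≤ q) (ht : 2 ≤ t) :
    ¬ HasCliqueUnion (HGraph n p q t) p q t := by
  classical
  rintro ⟨A, B, hA, hB, hAB, hBB⟩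
  set g : Option (Fin (t-1)) → Finset (Fin n) := fun o => o.elim A B with hg
  have hcl : ∀ o, (HGraph n p q t).IsClique (g o) ∧ p ≤ (g o).card := by
    rintro (_ | i)
    · exact ⟨hA.1, hA.2.ge⟩
    · exact ⟨(hB i).1, le_trans hpq (hB i).2.ge⟩
  have hch : ∀ o, ∃ b, b < t - 1 ∧
      (g o).filter (fun x => p - 2 ≤ x.val) ⊆ blk n p q b :=
    fun o => clique_nondom_subset_blk hp (hcl o).1 (hcl o).2
  choose b hblt hbsub using hch
  have hne1 : Fintype.card (Fin (t-1)) < Fintype.card (Option (Fin (t-1))) := by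
    simp
  obtain ⟨o, o', hoo, heq⟩ :=
    Fintype.exists_ne_map_eq_of_card_lt (fun o => (⟨b o, hblt o⟩ : Fin (t-1))) hne1
  have hbeq : b o = b o' := by
    have := congrArg Fin.val heq; simpa using this
  have hdisj : Disjoint (g o) (g o') := by
    match o, o' with
    | none, none => exact absurd rfl hoo
    | none, some j => exact hAB j
    | some i, none => exact (hAB i).symm
    | some i, some j =>
      exact hBB i j (by rintro rfl; exact hoo rfl)
  -- counting
  set No := (g o).filter (fun x => p - 2 ≤ x.val)
  set No' := (g o').filter (fun x => p - 2 ≤ x.val)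
  have hNdisj : Disjoint No No' :=
    Finset.disjoint_filter_filter hdisj
  have hNsub : No ∪ No' ⊆ blk n p q (b o) := by
    apply Finset.union_subset (hbsub o)
    rw [hbeq]; exact hbsub o'
  have hNcard : No.card + No'.card ≤ q + 1 := by
    rw [← Finset.card_union_of_disjoint hNdisj]
    exact le_trans (Finset.card_le_card hNsub) blk_card_le
  set Do := (g o).filter (fun x => ¬ p - 2 ≤ x.val)
  set Do' := (g o').filter (fun x => ¬ p - 2 ≤ x.val)
  have hDdisj : Disjoint Do Do' :=
    Finset.disjoint_filter_filter hdisj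
  have hDsub : Do ∪ Do' ⊆ Dv n p := by
    apply Finset.union_subset <;>
    · intro x hx
      rw [Finset.mem_filter] at hx
      rw [mem_Dv]; omega
  have hDcard : Do.card + Do'.card ≤ p - 2 := by
    rw [← Finset.card_union_of_disjoint hDdisj]
    exact le_trans (Finset.card_le_card hDsub) Dv_card_le
  have hsplit1 := Finset.card_filter_add_card_filter_not
    (s := g o) (p := fun x => p - 2 ≤ x.val)
  have hsplit2 := Finset.card_filter_add_card_filter_not
    (s := g o') (p := fun x => p - 2 ≤ x.val)
  have hsum : p + q ≤ (g o).card + (g o').card := by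
    match o, o' with
    | none, none => exact absurd rfl hoo
    | none, some j =>
      have e1 : (g none).card = p := hA.2
      have e2 : (g (some j)).card = q := (hB j).2
      omega
    | some i, none =>
      have e1 : (g (some i)).card = q := (hB i).2
      have e2 : (g none).card = p := hA.2
      omega
    | some i, some j =>
      have e1 : (g (some i)).card = q := (hB i).2
      have e2 : (g (some j)).card = q := (hB j).2
      omega
  have : No.card + Do.card = (g o).card := hsplit1
  have : No'.card + Do'.card = (g o').card := hsplit2
  omega

set_option maxHeartbeats 1000000 in
theorem stmt_2_part2 (n p q t : ℕ) (hp : 2 ≤ p) (hpq : p ≤ q) (ht : 2 ≤ t)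
    (hn : p + (t-1)*q + t - 3 ≤ n) (u v : Fin n) (huv : u ≠ v)
    (hnadj : ¬ (HGraph n p q t).Adj u v) :
    HasCliqueUnion (HGraph n p q t ⊔ SimpleGraph.fromEdgeSet {s(u,v)}) p q t := by
  classical
  have htq : q ≤ (t-1)*q := Nat.le_mul_of_pos_left q (by omega)
  have hzone : p - 2 + (t-1)*(q+1) ≤ n := by
    have : (t-1)*(q+1) = (t-1)*q + (t-1) := by ring
    omega
  rw [adj_iff] at hnadj
  push_neg at hnadj
  have hnd := hnadj huv
  have hu : p - 2 ≤ u.val := by omega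
  have hv : p - 2 ≤ v.val := by omega
  have hz : ¬ (u.val < p - 2 + (t-1)*(q+1) ∧ v.val < p - 2 + (t-1)*(q+1) ∧
      (u.val - (p-2)) / (q+1) = (v.val - (p-2)) / (q+1)) := by tauto
  set G' := HGraph n p q t ⊔ SimpleGraph.fromEdgeSet {s(u,v)} with hG'
  -- the p-clique
  set A : Finset (Fin n) := insert u (insert v (Dv n p)) with hAdef
  have hvD : v ∉ Dv n p := by rw [mem_Dv]; omega
  have huD : u ∉ insert v (Dv n p) := by
    rw [Finset.mem_insert, mem_Dv]
    push_neg
    exact ⟨huv, by omega⟩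
  have hAcard : A.card = p := by
    rw [hAdef, Finset.card_insert_of_notMem huD, Finset.card_insert_of_notMem hvD,
      Dv_card (by omega)]
    omega
  have hAmem : ∀ x ∈ A, x = u ∨ x = v ∨ x.val < p - 2 := by
    intro x hx
    rw [hAdef, Finset.mem_insert, Finset.mem_insert, mem_Dv] at hx
    tauto
  have hAclique : G'.IsClique (A : Set (Fin n)) := by
    intro a ha b hb hab
    rw [hG', SimpleGraph.sup_adj]
    rcases hAmem a ha with rfl | rfl | hd
    · rcases hAmem b hb with rfl | rfl | hd
      · exact absurd rfl hab
      · right; rw [SimpleGraph.fromEdgeSet_adj]; exact ⟨by simp, hab⟩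
      · left; rw [adj_iff]; exact ⟨hab, Or.inr (Or.inl hd)⟩
    · rcases hAmem b hb with rfl | rfl | hd
      · right; rw [SimpleGraph.fromEdgeSet_adj]
        refine ⟨?_, hab⟩
        simp [Sym2.eq_swap]
      · exact absurd rfl hab
      · left; rw [adj_iff]; exact ⟨hab, Or.inr (Or.inl hd)⟩
    · left; rw [adj_iff]; exact ⟨hab, Or.inl hd⟩
  -- the (t-1) q-cliques
  have hblkuv : ∀ i : Fin (t-1), ¬ (u ∈ blk n p q i.val ∧ v ∈ blk n p q i.val) := by
    rintro i ⟨h1, h2⟩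
    rw [mem_blk] at h1 h2
    apply hz
    have hmul : (i.val+1)*(q+1) ≤ (t-1)*(q+1) := Nat.mul_le_mul_right _ i.isLt
    rw [add_mul, one_mul] at hmul
    have d1 : (u.val - (p-2)) / (q+1) = i.val :=
      Nat.div_eq_of_lt_le (by omega) (by rw [add_mul, one_mul]; omega)
    have d2 : (v.val - (p-2)) / (q+1) = i.val :=
      Nat.div_eq_of_lt_le (by omega) (by rw [add_mul, one_mul]; omega)
    exact ⟨by omega, by omega, by rw [d1, d2]⟩
  have hex : ∀ i : Fin (t-1), ∃ S, S ⊆ blk n p q i.val \ {u, v} ∧ S.card = q := by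
    intro i
    have hcard := blk_card (n := n) (p := p) (q := q) (b := i.val) (by
      have : (i.val+1)*(q+1) ≤ (t-1)*(q+1) := Nat.mul_le_mul_right _ (by omega)
      rw [add_mul, one_mul] at this
      omega)
    have hint : (blk n p q i.val ∩ {u, v}).card ≤ 1 := by
      rw [Finset.card_le_one]
      intro a ha c hc
      rw [Finset.mem_inter, Finset.mem_insert, Finset.mem_singleton] at ha hc
      have := hblkuv i
      rcases ha.2 with rfl | rfl <;> rcases hc.2 with rfl | rfl <;>
        first | rfl | (exfalso; exact this ⟨by tauto, by tauto⟩)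
    have hsd := Finset.card_sdiff_add_card_inter (blk n p q i.val) {u, v}
    exact Finset.exists_subset_card_eq (by omega)
  choose Bf hBsub hBcard using hex
  refine ⟨A, Bf, ⟨hAclique, hAcard⟩, ?_, ?_, ?_⟩
  · intro i
    refine ⟨?_, hBcard i⟩
    intro a ha b hb hab
    have ha' := (Finset.mem_sdiff.mp (hBsub i ha)).1
    have hb' := (Finset.mem_sdiff.mp (hBsub i hb)).1
    rw [hG', SimpleGraph.sup_adj]
    exact Or.inl (blk_adj i.isLt ha' hb' hab)
  · intro i
    rw [Finset.disjoint_left]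
    intro x hx hxB
    have hx' := Finset.mem_sdiff.mp (hBsub i hxB)
    rcases hAmem x hx with rfl | rfl | hd
    · exact hx'.2 (by simp)
    · exact hx'.2 (by simp)
    · have := (mem_blk.mp hx'.1).1; omega
  · intro i j hij
    have : Disjoint (blk n p q i.val) (blk n p q j.val) :=
      blk_disjoint (fun h => hij (Fin.ext h))
    exact Finset.disjoint_of_subset_left (fun x hx => (Finset.mem_sdiff.mp (hBsub i hx)).1)
      (Finset.disjoint_of_subset_right (fun x hx => (Finset.mem_sdiff.mp (hBsub j hx)).1) this)

end HSat

/-- `H(n,p,q,t)` is `K_p ∪ (t-1)K_q`-saturated. -/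
theorem stmt_2 (n p q t : ℕ) (hp : 2 ≤ p) (hpq : p ≤ q) (ht : 2 ≤ t)
    (hn : p + (t-1)*q + t - 3 ≤ n) :
    Saturated (HGraph n p q t) p q t := by
  exact ⟨HSat.stmt_2_part1 n p q t hp hpq ht,
    fun u v huv hnadj => HSat.stmt_2_part2 n p q t hp hpq ht hn u v huv hnadj⟩
end

section
/- Let G be a K_p ∪ (t-1)K_q-saturated graph, let v be a vertex of degree p-2 with neighborhood S, and let u be any vertex not in S ∪ {v}. Then S ⊆ N_G(u), the induced subgraph G[S] is a complete graph K_{p-2}, and G \ (S ∪ {u,v}) contains t-1 pairwise disjoint copies of K_q. -/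
/-- Setup after Lemma 2: `G` saturated, `v` of degree `p-2` with `S = N_G(v)`,
`u ∉ S ∪ {v}`. Then `S ⊆ N(u)`, `G[S]` is complete, and `G \ (S ∪ {u,v})`
contains `t-1` pairwise disjoint copies of `K_q`. -/
theorem stmt_5 {V : Type*} [Fintype V] (G : SimpleGraph V) (p q t : ℕ)
    (hp : 2 ≤ p) (hpq : p ≤ q) (ht : 2 ≤ t)
    (hsat : Saturated G p q t)
    (v : V) (hdeg : (G.neighborSet v).ncard = p - 2)
    (u : V) (huv : u ≠ v) (huS : u ∉ G.neighborSet v) :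
    G.neighborSet v ⊆ G.neighborSet u ∧
    G.IsClique (G.neighborSet v) ∧
    ∃ B : Fin (t-1) → Finset V,
      (∀ i, G.IsNClique q (B i)) ∧
      (∀ i j, i ≠ j → Disjoint (B i) (B j)) ∧
      ∀ i, ∀ x ∈ B i, x ∉ G.neighborSet v ∧ x ≠ u ∧ x ≠ v := by
  classical
  obtain ⟨hnot, hadd⟩ := hsat
  have hadjuv : ¬ G.Adj u v := fun h => huS ((G.adj_comm u v).mp h)
  obtain ⟨A, B, hA, hB, hAB, hBB⟩ := hadd u v huv hadjuv
  set G' := G ⊔ SimpleGraph.fromEdgeSet {s(u,v)} with hG'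
  have lift : ∀ {x y : V}, G'.Adj x y → (x ≠ u ∨ y ≠ v) → (x ≠ v ∨ y ≠ u) → G.Adj x y := by
    intro x y hxy h1 h2
    rcases hxy with h | h
    · exact h
    · exfalso
      rw [SimpleGraph.fromEdgeSet_adj, Set.mem_singleton_iff, Sym2.eq_iff] at h
      rcases h.1 with ⟨rfl, rfl⟩ | ⟨rfl, rfl⟩ <;> tauto
  have liftClique : ∀ (P : Finset V), ¬(u ∈ P ∧ v ∈ P) → G'.IsClique ↑P → G.IsClique ↑P := by
    intro P h hP x hx y hy hxy
    refine lift (hP hx hy hxy) ?_ ?_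
    · by_contra hc; push_neg at hc; exact h ⟨hc.1 ▸ hx, hc.2 ▸ hy⟩
    · by_contra hc; push_neg at hc; exact h ⟨hc.2 ▸ hy, hc.1 ▸ hx⟩
  have huSf : u ∉ G.neighborFinset v := by
    rw [SimpleGraph.mem_neighborFinset]; exact fun h => huS ((G.adj_comm v u).mp h).symm
  have hdegf : (G.neighborFinset v).card = p - 2 := by
    rw [SimpleGraph.neighborFinset_def, ← Set.ncard_eq_toFinset_card']; exact hdeg
  -- degree argument
  have degarg : ∀ (C : Finset V) (r : ℕ), p ≤ r → G'.IsNClique r C → u ∈ C → v ∈ C →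
      r = p ∧ C.erase v = insert u (G.neighborFinset v) := by
    intro C r hpr hC huC hvC
    have hsub : C.erase v ⊆ insert u (G.neighborFinset v) := by
      intro x hx
      obtain ⟨hxv, hxC⟩ := Finset.mem_erase.mp hx
      have hadj : G'.Adj x v := hC.1 hxC hvC hxv
      rcases hadj with h | h
      · exact Finset.mem_insert_of_mem (by rw [SimpleGraph.mem_neighborFinset]; exact h.symm)
      · rw [SimpleGraph.fromEdgeSet_adj, Set.mem_singleton_iff, Sym2.eq_iff] at h
        rcases h.1 with ⟨rfl, -⟩ | ⟨h3, -⟩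
        · exact Finset.mem_insert_self _ _
        · exact absurd h3 hxv
    have hcard1 : (C.erase v).card = r - 1 := by
      rw [Finset.card_erase_of_mem hvC, hC.2]
    have hcard2 : (insert u (G.neighborFinset v)).card = p - 1 := by
      rw [Finset.card_insert_of_notMem huSf, hdegf]; omega
    have hle := Finset.card_le_card hsub
    rw [hcard1, hcard2] at hle
    have hrp : r = p := by omega
    refine ⟨hrp, Finset.eq_of_subset_of_card_le hsub ?_⟩
    rw [hcard1, hcard2]; omega
  -- the main argument given the clique containing u and v
  have main : ∀ (C : Finset V), G'.IsClique ↑C → u ∈ C → v ∈ C →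
      C.erase v = insert u (G.neighborFinset v) →
      ∀ (B' : Fin (t-1) → Finset V), (∀ i, G'.IsNClique q (B' i)) →
      (∀ i, Disjoint C (B' i)) → (∀ i j, i ≠ j → Disjoint (B' i) (B' j)) →
      G.neighborSet v ⊆ G.neighborSet u ∧
      G.IsClique (G.neighborSet v) ∧
      ∃ B : Fin (t-1) → Finset V,
        (∀ i, G.IsNClique q (B i)) ∧
        (∀ i j, i ≠ j → Disjoint (B i) (B j)) ∧
        ∀ i, ∀ x ∈ B i, x ∉ G.neighborSet v ∧ x ≠ u ∧ x ≠ v := by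
    intro C hCcl huC hvC heq B' hB' hCB' hB'B'
    have hSfC : ∀ x ∈ G.neighborFinset v, x ∈ C := by
      intro x hx
      have : x ∈ C.erase v := heq ▸ Finset.mem_insert_of_mem hx
      exact Finset.mem_of_mem_erase this
    have hSne : ∀ x ∈ G.neighborFinset v, x ≠ v := by
      intro x hx
      rw [SimpleGraph.mem_neighborFinset] at hx
      exact fun h => (G.irrefl (h ▸ hx))
    refine ⟨?_, ?_, ?_⟩
    · intro x hx
      have hxf : x ∈ G.neighborFinset v := by rwa [SimpleGraph.mem_neighborFinset]
      have hxC : x ∈ C := hSfC x hxf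
      have hxu : x ≠ u := fun h => huSf (h ▸ hxf)
      have hadj : G'.Adj x u := hCcl hxC huC hxu
      have : G.Adj x u := lift hadj (Or.inr huv) (Or.inl (hSne x hxf))
      exact this.symm
    · intro x hx y hy hxy
      have hxf : x ∈ G.neighborFinset v := by
        rw [SimpleGraph.mem_neighborFinset]; exact hx
      have hyf : y ∈ G.neighborFinset v := by
        rw [SimpleGraph.mem_neighborFinset]; exact hy
      exact lift (hCcl (hSfC x hxf) (hSfC y hyf) hxy) (Or.inr (hSne y hyf))
        (Or.inl (hSne x hxf))
    · refine ⟨B', fun i => ⟨?_, (hB' i).2⟩, hB'B', ?_⟩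
      · refine liftClique _ (fun h => ?_) (hB' i).1
        exact Finset.disjoint_left.mp (hCB' i) huC h.1
      · intro i x hx
        have hxC : x ∉ C := fun h => Finset.disjoint_left.mp (hCB' i) h hx
        refine ⟨fun h => hxC (hSfC x (by rwa [SimpleGraph.mem_neighborFinset])), ?_, ?_⟩
        · exact fun h => hxC (h ▸ huC)
        · exact fun h => hxC (h ▸ hvC)
  by_cases hcase : (u ∈ A ∧ v ∈ A) ∨ ∃ i, u ∈ B i ∧ v ∈ B i
  · rcases hcase with ⟨hu, hv⟩ | ⟨i, hu, hv⟩
    · obtain ⟨hr, heq⟩ := degarg A p le_rfl hA hu hv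
      exact main A hA.1 hu hv heq B hB hAB hBB
    · obtain ⟨hr, heq⟩ := degarg (B i) q hpq (hB i) hu hv
      refine main (B i) (hB i).1 hu hv heq (fun j => if j = i then A else B j)
        (fun j => ?_) (fun j => ?_) (fun j k hjk => ?_)
      · show G'.IsNClique q (if j = i then A else B j)
        by_cases h : j = i
        · rw [if_pos h]; exact ⟨hA.1, by rw [hA.2, hr]⟩
        · rw [if_neg h]; exact hB j
      · show Disjoint (B i) (if j = i then A else B j)
        by_cases h : j = i
        · rw [if_pos h]; exact (hAB i).symm
        · rw [if_neg h]; exact hBB i j (fun hij => h hij.symm)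
      · show Disjoint (if j = i then A else B j) (if k = i then A else B k)
        by_cases h1 : j = i <;> by_cases h2 : k = i
        · exact absurd (h1.trans h2.symm) hjk
        · rw [if_pos h1, if_neg h2]
          exact hAB k
        · rw [if_neg h1, if_pos h2]
          exact (hAB j).symm
        · rw [if_neg h1, if_neg h2]
          exact hBB j k hjk
  · exfalso
    push_neg at hcase
    refine hnot ⟨A, B, ⟨liftClique A (fun h => hcase.1 h.1 h.2) hA.1, hA.2⟩,
      fun i => ⟨liftClique (B i) (fun h => hcase.2 i h.1 h.2) (hB i).1, (hB i).2⟩, hAB, hBB⟩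
end

section
/- Let G be a K_p ∪ (t-1)K_q-saturated graph, v a vertex of degree p-2 with neighborhood S, u a vertex outside S ∪ {v}, and F a subgraph of G \ (S ∪ {u,v}) isomorphic to (t-1)K_q. Then every neighbor of u outside S lies in V(F). -/
/-- Lemma 3: with `S = N_G(v)`, `|S| = p-2`, `u ∉ S ∪ {v}`, and `F` a copy of
`(t-1)K_q` in `G \ (S ∪ {u,v})`, every neighbor of `u` outside `S` lies in `V(F)`. -/
theorem stmt_6 {V : Type*} [Fintype V] (G : SimpleGraph V) (p q t : ℕ)
    (hp : 2 ≤ p) (hpq : p ≤ q) (ht : 2 ≤ t)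
    (hsat : Saturated G p q t)
    (v : V) (hdeg : (G.neighborSet v).ncard = p - 2)
    (u : V) (huv : u ≠ v) (huS : u ∉ G.neighborSet v)
    (B : Fin (t-1) → Finset V)
    (hB : ∀ i, G.IsNClique q (B i))
    (hBdisj : ∀ i j, i ≠ j → Disjoint (B i) (B j))
    (hBavoid : ∀ i, ∀ x ∈ B i, x ∉ G.neighborSet v ∧ x ≠ u ∧ x ≠ v) :
    ∀ w : V, G.Adj u w → w ∉ G.neighborSet v → ∃ i, w ∈ B i := by
  classical
  intro w huw hwS
  by_contra hno
  push_neg at hno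
  set Sf := (Set.toFinite (G.neighborSet v)).toFinset with hSf
  have hSfmem : ∀ x, x ∈ Sf ↔ G.Adj v x := by
    intro x; simp [hSf]
  have hScard : Sf.card = p - 2 := by
    rw [hSf, ← Set.ncard_eq_toFinset_card]; exact hdeg
  have hvS : v ∉ Sf := by simp [hSfmem]
  have hu' : ¬ G.Adj v u := by
    intro h; exact huS h
  have hw' : ¬ G.Adj v w := by
    intro h; exact hwS h
  have hwv : w ≠ v := by
    rintro rfl; exact hu' huw.symm
  -- Key lemma: for any non-neighbor x of v, S ∪ {x} is a (p-1)-clique in G.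
  have key : ∀ x : V, x ≠ v → ¬ G.Adj v x →
      G.IsNClique (p-1) (insert x Sf) := by
    intro x hxv hxadj
    have hxS : x ∉ Sf := by simp [hSfmem, hxadj]
    have hTcard : (insert x Sf).card = p - 1 := by
      rw [Finset.card_insert_of_notMem hxS, hScard]; omega
    obtain ⟨A, C, hA, hC, hdisjAC, hpair⟩ :=
      hsat.2 x v hxv (fun h => hxadj h.symm)
    set G' := G ⊔ SimpleGraph.fromEdgeSet {s(x,v)} with hG'
    have hG'adj : ∀ a b, G'.Adj a b →
        G.Adj a b ∨ (a = x ∧ b = v) ∨ (a = v ∧ b = x) := by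
      intro a b hab
      rcases hab with h | h
      · exact Or.inl h
      · rw [SimpleGraph.fromEdgeSet_adj] at h
        have := h.1
        simp only [Set.mem_singleton_iff, Sym2.eq, Sym2.rel_iff', Prod.mk.injEq,
          Prod.swap_prod_mk] at this
        rcases this with ⟨h1, h2⟩ | ⟨h1, h2⟩
        · exact Or.inr (Or.inl ⟨h1, h2⟩)
        · exact Or.inr (Or.inr ⟨h1, h2⟩)
    have transfer : ∀ (D : Finset V) (n : ℕ), G'.IsNClique n D →
        ¬ (x ∈ D ∧ v ∈ D) → G.IsNClique n D := by
      intro D n hD hxor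
      refine ⟨fun a ha b hb hab => ?_, hD.2⟩
      rcases hG'adj a b (hD.1 ha hb hab) with h | ⟨h1, h2⟩ | ⟨h1, h2⟩
      · exact h
      · exact absurd ⟨h1 ▸ ha, h2 ▸ hb⟩ hxor
      · exact absurd ⟨h2 ▸ hb, h1 ▸ ha⟩ hxor
    -- The new edge must be used by one of the parts
    by_cases hxA : x ∈ A ∧ v ∈ A
    · -- the p-clique A contains x and v; then A.erase v = insert x Sf
      have hsub : A.erase v ⊆ insert x Sf := by
        intro a ha
        have haA : a ∈ A := Finset.mem_of_mem_erase ha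
        have hav : a ≠ v := Finset.ne_of_mem_erase ha
        have hadj : G'.Adj v a := hA.1 hxA.2 haA (fun h => hav h.symm)
        rcases hG'adj v a hadj with h | ⟨h1, h2⟩ | ⟨h1, h2⟩
        · exact Finset.mem_insert_of_mem ((hSfmem a).2 h)
        · exact absurd h1 hxv.symm
        · exact h2 ▸ Finset.mem_insert_self x Sf
      have hcard : (A.erase v).card = p - 1 := by
        rw [Finset.card_erase_of_mem hxA.2, hA.2]
      have heq : A.erase v = insert x Sf :=
        Finset.eq_of_subset_of_card_le hsub (by rw [hTcard, hcard])
      have hcl : G'.IsNClique (p-1) (A.erase v) :=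
        ⟨hA.1.subset (by exact_mod_cast Finset.erase_subset v A), hcard⟩
      have : G.IsNClique (p-1) (A.erase v) :=
        transfer _ _ hcl (fun h => (Finset.notMem_erase v A) h.2)
      rwa [heq] at this
    · by_cases hxC : ∃ i, x ∈ C i ∧ v ∈ C i
      · obtain ⟨i, hxi, hvi⟩ := hxC
        have hsub : (C i).erase v ⊆ insert x Sf := by
          intro a ha
          have haC : a ∈ C i := Finset.mem_of_mem_erase ha
          have hav : a ≠ v := Finset.ne_of_mem_erase ha
          have hadj : G'.Adj v a := (hC i).1 hvi haC (fun h => hav h.symm)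
          rcases hG'adj v a hadj with h | ⟨h1, h2⟩ | ⟨h1, h2⟩
          · exact Finset.mem_insert_of_mem ((hSfmem a).2 h)
          · exact absurd h1 hxv.symm
          · exact h2 ▸ Finset.mem_insert_self x Sf
        have hcard : ((C i).erase v).card = q - 1 := by
          rw [Finset.card_erase_of_mem hvi, (hC i).2]
        have heq : (C i).erase v = insert x Sf :=
          Finset.eq_of_subset_of_card_le hsub (by rw [hTcard, hcard]; omega)
        refine ⟨fun a ha b hb hab => ?_, hTcard⟩
        rw [← heq] at ha hb
        have ha' : a ∈ C i := Finset.mem_of_mem_erase ha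
        have hb' : b ∈ C i := Finset.mem_of_mem_erase hb
        rcases hG'adj a b ((hC i).1 ha' hb' hab) with h | ⟨h1, h2⟩ | ⟨h1, h2⟩
        · exact h
        · exact absurd h2 (Finset.ne_of_mem_erase hb)
        · exact absurd h1 (Finset.ne_of_mem_erase ha)
      · -- no part uses the new edge: G itself contains the forbidden structure
        push_neg at hxC
        exfalso
        apply hsat.1
        refine ⟨A, C, transfer A p hA hxA, fun i => transfer (C i) q (hC i) ?_,
          hdisjAC, hpair⟩
        intro h; exact hxC i h.1 h.2
  -- apply key to u and w
  have ku := key u huv hu'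
  have kw := key w hwv hw'
  have huSf : u ∉ Sf := by simp [hSfmem, hu']
  have hwSf : w ∉ Sf := by simp [hSfmem, hw']
  have huw' : u ≠ w := huw.ne
  -- S ∪ {u, w} is a p-clique in G
  have adjuS : ∀ s ∈ Sf, G.Adj u s := fun s hs =>
    ku.1 (Finset.mem_insert_self u Sf) (Finset.mem_insert_of_mem hs)
      (fun h => huSf (h ▸ hs))
  have adjwS : ∀ s ∈ Sf, G.Adj w s := fun s hs =>
    kw.1 (Finset.mem_insert_self w Sf) (Finset.mem_insert_of_mem hs)
      (fun h => hwSf (h ▸ hs))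
  have adjSS : ∀ s ∈ Sf, ∀ s' ∈ Sf, s ≠ s' → G.Adj s s' := fun s hs s' hs' hne =>
    kw.1 (Finset.mem_insert_of_mem hs) (Finset.mem_insert_of_mem hs') hne
  have hAclique : G.IsNClique p (insert u (insert w Sf)) := by
    constructor
    · intro a ha b hb hab
      have ha' : a = u ∨ a = w ∨ a ∈ Sf := by
        simpa [Finset.mem_insert] using ha
      have hb' : b = u ∨ b = w ∨ b ∈ Sf := by
        simpa [Finset.mem_insert] using hb
      rcases ha' with h | h | h <;> rcases hb' with h' | h' | h'
      · exact absurd (h.trans h'.symm) hab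
      · rw [h, h']; exact huw
      · rw [h]; exact adjuS b h'
      · rw [h, h']; exact huw.symm
      · exact absurd (h.trans h'.symm) hab
      · rw [h]; exact adjwS b h'
      · rw [h']; exact (adjuS a h).symm
      · rw [h']; exact (adjwS a h).symm
      · exact adjSS a h b h' hab
    · rw [Finset.card_insert_of_notMem (by
        simp only [Finset.mem_insert]
        push_neg
        exact ⟨huw', huSf⟩),
        Finset.card_insert_of_notMem hwSf, hScard]
      omega
  -- contradiction with saturation
  apply hsat.1
  refine ⟨insert u (insert w Sf), B, hAclique, hB, fun i => ?_, hBdisj⟩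
  rw [Finset.disjoint_left]
  intro a ha hab
  obtain ⟨h1, h2, h3⟩ := hBavoid i a hab
  simp only [Finset.mem_insert] at ha
  rcases ha with rfl | rfl | ha
  · exact h2 rfl
  · exact hno i hab
  · exact h1 ((hSfmem a).1 ha)
end

section
/- Let G be a K_p ∪ (t-1)K_q-saturated graph, v a vertex of degree p-2 with S = N_G(v), and F ⊆ G \ (S ∪ {v}) a subgraph isomorphic to (t-1)K_q. Then the set of vertices outside S ∪ V(F) ∪ {v} induces no edges in G, i.e., the complement of S ∪ V(F) in V(G) is an independent set (apart from v, which also has no neighbors outside S). -/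
lemma aux_clique {V : Type*} [Fintype V] (G : SimpleGraph V) (p q t : ℕ)
    (hp : 2 ≤ p) (hpq : p ≤ q)
    (hsat : Saturated G p q t)
    (v : V) (hdeg : (G.neighborSet v).ncard = p - 2) :
    ∀ u : V, u ≠ v → ¬ G.Adj v u → G.IsClique (insert u (G.neighborSet v)) := by
  classical
  intro u hne hnadj
  obtain ⟨A, B', hA, hB', hd1, hd2⟩ :=
    hsat.2 u v hne (fun h => hnadj h.symm)
  set G' := G ⊔ SimpleGraph.fromEdgeSet {s(u,v)} with hG'
  -- transfer: a G'-clique not containing both u,v is a G-clique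
  have tr : ∀ (C : Finset V), G'.IsClique ↑C → ¬(u ∈ C ∧ v ∈ C) → G.IsClique ↑C := by
    intro C hC hnC a ha b hb hab
    rcases hC ha hb hab with h | h
    · exact h
    · exfalso
      rw [SimpleGraph.fromEdgeSet_adj, Set.mem_singleton_iff, Sym2.eq_iff] at h
      rcases h.1 with ⟨rfl, rfl⟩ | ⟨rfl, rfl⟩
      · exact hnC ⟨ha, hb⟩
      · exact hnC ⟨hb, ha⟩
  have key : ∀ (C : Finset V), G'.IsClique ↑C → u ∈ C → v ∈ C → p ≤ C.card →
      G.IsClique (insert u (G.neighborSet v)) := by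
    intro C hC hu hv hcard
    have hsub : ↑(C \ {u, v}) ⊆ G.neighborSet v := by
      intro s hs
      simp only [Finset.coe_sdiff, Set.mem_diff, Finset.coe_insert, Finset.coe_singleton,
        Set.mem_insert_iff, Set.mem_singleton_iff, Finset.mem_coe] at hs
      obtain ⟨hsC, hsn⟩ := hs
      push_neg at hsn
      have hadj : G'.Adj v s := hC hv hsC (fun h => hsn.2 h.symm)
      rcases hadj with h | h
      · exact h
      · exfalso
        rw [SimpleGraph.fromEdgeSet_adj, Set.mem_singleton_iff, Sym2.eq_iff] at h
        rcases h.1 with ⟨h1, h2⟩ | ⟨h1, h2⟩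
        · exact hne (h1 ▸ rfl)
        · exact hsn.1 h2
    have huv : ({u, v} : Finset V) ⊆ C := by
      intro a ha; simp only [Finset.mem_insert, Finset.mem_singleton] at ha
      rcases ha with rfl | rfl <;> assumption
    have hcard2 : (C \ {u, v}).card = C.card - 2 := by
      rw [Finset.card_sdiff_of_subset huv, Finset.card_insert_of_notMem (by simpa using hne),
        Finset.card_singleton]
    have hfin : (G.neighborSet v).Finite := Set.toFinite _
    have hle : (G.neighborSet v).ncard ≤ (↑(C \ {u, v}) : Set V).ncard := by
      rw [Set.ncard_coe_finset, hcard2, hdeg]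
      omega
    have heq : (↑(C \ {u, v}) : Set V) = G.neighborSet v :=
      Set.eq_of_subset_of_ncard_le hsub hle hfin
    -- the clique
    intro a ha b hb hab
    have hvmem : ∀ w, w ∈ insert u (G.neighborSet v) → w ≠ v ∧ w ∈ C := by
      intro w hw
      rcases hw with rfl | hw
      · exact ⟨hne, hu⟩
      · rw [← heq] at hw
        simp only [Finset.coe_sdiff, Set.mem_diff, Finset.mem_coe, Finset.coe_insert,
          Finset.coe_singleton, Set.mem_insert_iff, Set.mem_singleton_iff] at hw
        exact ⟨fun h => hw.2 (Or.inr h), hw.1⟩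
    obtain ⟨hav, haC⟩ := hvmem a ha
    obtain ⟨hbv, hbC⟩ := hvmem b hb
    rcases hC haC hbC hab with h | h
    · exact h
    · exfalso
      rw [SimpleGraph.fromEdgeSet_adj, Set.mem_singleton_iff, Sym2.eq_iff] at h
      rcases h.1 with ⟨h1, h2⟩ | ⟨h1, h2⟩
      · exact hbv h2
      · exact hav h1
  by_cases hP : (u ∈ A ∧ v ∈ A) ∨ ∃ i, u ∈ B' i ∧ v ∈ B' i
  · rcases hP with ⟨hu, hv⟩ | ⟨i, hu, hv⟩
    · exact key A hA.1 hu hv hA.2.ge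
    · exact key (B' i) (hB' i).1 hu hv ((hB' i).2 ▸ hpq)
  · exfalso
    push_neg at hP
    exact hsat.1 ⟨A, B', ⟨tr A hA.1 (fun h => (hP.1 h.1) h.2), hA.2⟩,
      fun i => ⟨tr (B' i) (hB' i).1 (fun h => (hP.2 i h.1) h.2), (hB' i).2⟩, hd1, hd2⟩

/-- With `S = N_G(v)` of size `p-2` and `F ≅ (t-1)K_q` in `G \ (S ∪ {v})`,
the vertices outside `S ∪ V(F) ∪ {v}` induce no edges of `G`. -/
theorem stmt_7 {V : Type*} [Fintype V] (G : SimpleGraph V) (p q t : ℕ)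
    (hp : 2 ≤ p) (hpq : p ≤ q) (ht : 2 ≤ t)
    (hsat : Saturated G p q t)
    (v : V) (hdeg : (G.neighborSet v).ncard = p - 2)
    (B : Fin (t-1) → Finset V)
    (hB : ∀ i, G.IsNClique q (B i))
    (hBdisj : ∀ i j, i ≠ j → Disjoint (B i) (B j))
    (hBavoid : ∀ i, ∀ x ∈ B i, x ∉ G.neighborSet v ∧ x ≠ v) :
    ∀ x y : V, x ∉ G.neighborSet v → y ∉ G.neighborSet v →
      (∀ i, x ∉ B i) → (∀ i, y ∉ B i) → x ≠ v → y ≠ v → ¬ G.Adj x y := by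
  classical
  intro x y hx hy hxB hyB hxv hyv hadj
  have hSx := aux_clique G p q t hp hpq hsat v hdeg x hxv (fun h => hx h)
  have hSy := aux_clique G p q t hp hpq hsat v hdeg y hyv (fun h => hy h)
  have hfin : (G.neighborSet v).Finite := Set.toFinite _
  have hxy : x ≠ y := G.ne_of_adj hadj
  set Sf : Finset V := hfin.toFinset with hSf
  have hScoe : (↑Sf : Set V) = G.neighborSet v := hfin.coe_toFinset
  have hxS : x ∉ Sf := fun h => hx (hScoe ▸ Finset.mem_coe.mpr h)
  have hyS : y ∉ Sf := fun h => hy (hScoe ▸ Finset.mem_coe.mpr h)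
  apply hsat.1
  refine ⟨insert x (insert y Sf), B, ⟨?_, ?_⟩, hB, ?_, hBdisj⟩
  · -- clique
    have h1 : G.IsClique (insert y (G.neighborSet v)) := hSy
    have h2 : G.IsClique (insert x (insert y (G.neighborSet v))) := by
      apply h1.insert
      intro b hb hbx
      rcases hb with rfl | hb
      · exact hadj
      · exact hSx (Set.mem_insert x _) (Set.mem_insert_of_mem _ hb) hbx
    convert h2 using 1
    push_cast [hScoe]
    rfl
  · -- card
    rw [Finset.card_insert_of_notMem (by simp [hxS, hxy]),
      Finset.card_insert_of_notMem hyS]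
    have : Sf.card = p - 2 := by rw [← Set.ncard_eq_toFinset_card _ hfin, hdeg]
    omega
  · intro i
    rw [Finset.disjoint_left]
    intro a ha hai
    rcases Finset.mem_insert.mp ha with rfl | ha
    · exact hxB i hai
    rcases Finset.mem_insert.mp ha with rfl | ha
    · exact hyB i hai
    · exact (hBavoid i a hai).1 (hScoe ▸ Finset.mem_coe.mpr ha)
end
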